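/- arXiv:2511.21226 — 3 statements merged into one kernel-verified Lean document; each statement's English description precedes it below -/
import Mathlib

section
/- For functions f : B^J → A^I and g : C^H → B^J, the communication complex of f ∘ g is contained in f_*(K_g), i.e., every simplex of K_{f∘g} is contained in a set of the form ⋃_{j ∈ S} W^f(j) for some simplex S ∈ K_g. -/
/-- `W` determines output coordinate `i` of `f`: the value `f x i` only
depends on the restriction of `x` to `W`. -/
def Determines {B J A I : Type*} (f : (J → B) → (I → A)) (i : I) (W : Set J) : Prop :=
  ∀ x y : J → B, (∀ j ∈ W, x j = y j) → f x i = f y i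

/-- The input window of output coordinate `i`: the intersection of all
determining sets (which, for finite data, is the smallest determining set). -/
def window {B J A I : Type*} (f : (J → B) → (I → A)) (i : I) : Set J :=
  ⋂₀ {W : Set J | Determines f i W}

/-- The dual window of an input coordinate `j`. -/
def dualWindow {B J A I : Type*} (f : (J → B) → (I → A)) (j : J) : Set I :=
  {i : I | j ∈ window f i}

/-- The communication complex of `f`: `S ∈ K_f` iff `⋂_{i ∈ S} W_f(i) ≠ ∅`
(the empty intersection being all of `J`). -/
def commComplex {B J A I : Type*} (f : (J → B) → (I → A)) : Set (Set I) :=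
  {S : Set I | (⋂ i ∈ S, window f i).Nonempty}

/-- A complex `K` over `I` generates the language `L ⊆ A^I` if some function
`f : B^J → A^I` (with `B, J` finite, `J` nonempty) has image `L` and
communication complex contained in `K`. -/
def Generates {A I : Type*} (K : Set (Set I)) (L : Set (I → A)) : Prop :=
  ∃ (B J : Type) (_ : Finite B) (_ : Finite J) (_ : Nonempty J)
    (f : (J → B) → (I → A)), Set.range f = L ∧ commComplex f ⊆ K

/-- A complex is connected if no nontrivial partition of the vertex set splits
all of its simplices. -/
def ConnectedComplex {I : Type*} (K : Set (Set I)) : Prop :=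
  ¬ ∃ I0 : Set I, I0 ≠ ∅ ∧ I0 ≠ Set.univ ∧ ∀ S ∈ K, S ⊆ I0 ∨ S ⊆ I0ᶜ

/-- A simplicial complex: a downward closed collection of subsets. -/
def IsComplex {I : Type*} (K : Set (Set I)) : Prop :=
  ∀ S ∈ K, ∀ T ⊆ S, T ∈ K

/-- The 1-skeleton of a complex, as a simple graph. -/
def skeletonGraph {I : Type*} (K : Set (Set I)) : SimpleGraph I :=
  SimpleGraph.fromRel (fun i j => ({i, j} : Set I) ∈ K)

/-- The complex associated to a graph: the empty set, the singletons, and the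
edges. -/
def treeComplex {I : Type*} (G : SimpleGraph I) : Set (Set I) :=
  {S | S = ∅ ∨ (∃ i, S = {i}) ∨ ∃ i j, G.Adj i j ∧ S = ({i, j} : Set I)}

/-- The maximal simplices of a complex. -/
def maxSimplices {I : Type*} (K : Set (Set I)) : Set (Set I) :=
  {S | S ∈ K ∧ ∀ T ∈ K, S ⊆ T → S = T}

/-- The image `f_*(K)` of a complex `K` on the input coordinates of `f`:
generated by the unions of dual windows over simplices of `K`. -/
def pushComplex {B J A I : Type*} (f : (J → B) → (I → A)) (K : Set (Set J)) : Set (Set I) :=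
  {T : Set I | ∃ S ∈ K, T ⊆ ⋃ j ∈ S, dualWindow f j}


/-
A simplex `S` of `K_{f ∘ g}` has an input `h` common to all its windows. The window of `f ∘ g`
at `i` lies in `⋃_{j ∈ W_f(i)} W_g(j)`, because `f x i` is determined by `g x` on `W_f(i)` and
each `g x j` by `x` on `W_g(j)`. So each `i ∈ S` lies in `W^f(j)` for some `j` with
`h ∈ W_g(j)`, and these `j` form the simplex `W^g(h)` of `K_g`.
-/

section Window

variable {B J A I : Type*} {f : (J → B) → (I → A)} {i : I}

theorem Determines.univ : Determines f i Set.univ := fun x y hxy => by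
  rw [funext fun j => hxy j (Set.mem_univ j)]

theorem Determines.inter {W₁ W₂ : Set J} (h₁ : Determines f i W₁) (h₂ : Determines f i W₂) :
    Determines f i (W₁ ∩ W₂) := by
  classical
  intro x y hxy
  let z : J → B := fun j => if j ∈ W₁ then x j else y j
  calc f x i = f z i := h₁ x z fun j hj => by simp [z, hj]
    _ = f y i := h₂ z y fun j hj => by
      by_cases hj₁ : j ∈ W₁
      · simpa [z, hj₁] using hxy j ⟨hj₁, hj⟩
      · simp [z, hj₁]

theorem Determines.sInter {F : Set (Set J)} (hF : F.Finite)
    (h : ∀ W ∈ F, Determines f i W) : Determines f i (⋂₀ F) := by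
  induction F, hF using Set.Finite.induction_on with
  | empty => simpa using Determines.univ
  | insert _ _ ih =>
    rw [Set.sInter_insert]
    exact (h _ (Set.mem_insert _ _)).inter (ih fun W hW => h W (Set.mem_insert_of_mem _ hW))

variable (f i)

theorem determines_window [Finite J] : Determines f i (window f i) :=
  Determines.sInter (Set.toFinite _) fun _ hW => hW

theorem window_subset_of_determines {W : Set J} (hW : Determines f i W) : window f i ⊆ W :=
  Set.sInter_subset_of_mem hW

end Window

section Composition

variable {A B C I J H : Type*} (f : (J → B) → (I → A)) (g : (H → C) → (J → B))

theorem determines_comp_biUnion_window [Finite J] [Finite H] (i : I) :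
    Determines (f ∘ g) i (⋃ j ∈ window f i, window g j) := fun x y hxy =>
  determines_window f i (g x) (g y) fun j hj =>
    determines_window g j x y fun h hh => hxy h (Set.mem_biUnion hj hh)

theorem window_comp_subset [Finite J] [Finite H] (i : I) :
    window (f ∘ g) i ⊆ ⋃ j ∈ window f i, window g j :=
  window_subset_of_determines _ _ (determines_comp_biUnion_window f g i)

end Composition

theorem dualWindow_mem_commComplex {B J C H : Type*} (g : (H → C) → (J → B)) (h : H) :
    dualWindow g h ∈ commComplex g :=
  ⟨h, Set.mem_iInter₂.mpr fun _ hj => hj⟩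

theorem stmt5_general {A B C I J H : Type*} [Finite J] [Finite H]
    (f : (J → B) → (I → A)) (g : (H → C) → (J → B)) :
    commComplex (f ∘ g) ⊆ pushComplex f (commComplex g) := by
  rintro S ⟨h, hh⟩
  refine ⟨dualWindow g h, dualWindow_mem_commComplex g h, fun i hi => ?_⟩
  obtain ⟨j, hj, hhj⟩ :=
    Set.mem_iUnion₂.mp (window_comp_subset f g i (Set.mem_iInter₂.mp hh i hi))
  exact Set.mem_iUnion₂.mpr ⟨j, hhj, hj⟩

/-- the communication complex of `f ∘ g` is contained in the
pushforward `f_*(K_g)`. -/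
theorem stmt5 {A B C I J H : Type*} [Finite A] [Finite B] [Finite C]
    [Finite I] [Finite J] [Finite H] [Nonempty H]
    (f : (J → B) → (I → A)) (g : (H → C) → (J → B)) :
    commComplex (f ∘ g) ⊆ pushComplex f (commComplex g) :=
  stmt5_general f g
end

section
/- Let L ⊆ A^I, J ⊆ I, and suppose a complex K over J generates π_J(L). Then the join Δ_{I∖J} ⋆ K (where Δ_{I∖J} is the full complex on I∖J) generates L. -/
/-- if a complex `K` over `J ⊆ I` generates the projection
`π_J(L)`, then the join `Δ_{I∖J} ⋆ K` generates `L`. -/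
theorem stmt11 {A I : Type} [Finite A] [Finite I] (L : Set (I → A)) (J : Set I)
    (K : Set (Set ↥J)) (hK : IsComplex K)
    (h : Generates K ((fun x (j : ↥J) => x j.1) '' L)) :
    Generates {T : Set I | ∃ S ∈ K, T ⊆ Jᶜ ∪ Subtype.val '' S} L := by
  classical
  obtain ⟨B, J0, hB, hJ0, hne, f, hrange, hcomm⟩ := h
  obtain ⟨j0⟩ := hne
  set g : ((J0 ⊕ Unit) → B × (I → A)) → (I → A) := fun x =>
    if h1 : (x (Sum.inr ())).2 ∈ L ∧
        (fun j : ↥J => (x (Sum.inr ())).2 j.1) = f (fun j => (x (Sum.inl j)).1)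
    then (x (Sum.inr ())).2
    else if h2 : ∃ m, m ∈ L ∧ (fun j : ↥J => m j.1) = f (fun j => (x (Sum.inl j)).1)
    then h2.choose
    else (x (Sum.inr ())).2
    with hg
  have hex : ∀ x : (J0 ⊕ Unit) → B × (I → A),
      ∃ m, m ∈ L ∧ (fun j : ↥J => m j.1) = f (fun j => (x (Sum.inl j)).1) := by
    intro x
    have hr : f (fun j => (x (Sum.inl j)).1) ∈ Set.range f := Set.mem_range_self _
    rw [hrange] at hr
    obtain ⟨m, hm, hm2⟩ := hr
    exact ⟨m, hm, hm2⟩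
  have hmem : ∀ x, g x ∈ L := by
    intro x
    simp only [hg]
    split_ifs with h1 h2
    · exact h1.1
    · exact h2.choose_spec.1
    · exact absurd (hex x) h2
  have hval : ∀ x, ∀ j : ↥J, g x j.1 = f (fun j' => (x (Sum.inl j')).1) j := by
    intro x j
    simp only [hg]
    split_ifs with h1 h2
    · exact congrFun h1.2 j
    · exact congrFun h2.choose_spec.2 j
    · exact absurd (hex x) h2
  refine ⟨B × (I → A), J0 ⊕ Unit, inferInstance, inferInstance, ⟨Sum.inr ()⟩, g, ?_, ?_⟩
  · apply Set.eq_of_subset_of_subset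
    · rintro _ ⟨x, rfl⟩; exact hmem x
    · intro l hl
      have hr : (fun j : ↥J => l j.1) ∈ Set.range f := by
        rw [hrange]; exact ⟨l, hl, rfl⟩
      obtain ⟨xL, hxL⟩ := hr
      refine ⟨Sum.elim (fun j => (xL j, l)) (fun _ => (xL j0, l)), ?_⟩
      simp only [hg]
      rw [dif_pos ⟨hl, hxL.symm⟩]
      rfl
  · intro T hT
    obtain ⟨p, hp⟩ := hT
    set S : Set ↥J := {j : ↥J | (j : I) ∈ T} with hSdef
    have hsub : T ⊆ Jᶜ ∪ Subtype.val '' S := by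
      intro i hi
      by_cases hiJ : i ∈ J
      · exact Or.inr ⟨⟨i, hiJ⟩, hi, rfl⟩
      · exact Or.inl hiJ
    have hdet : ∀ (j : ↥J), (j : I) ∈ T → ∀ W, Determines f j W →
        p ∈ Sum.inl '' W := by
      intro j hj W hW
      have hDg : Determines g (j : I) (Sum.inl '' W) := by
        intro x y hxy
        show g x j.1 = g y j.1
        rw [hval x j, hval y j]
        apply hW
        intro j' hj'
        have := hxy (Sum.inl j') ⟨j', hj', rfl⟩
        rw [this]
      have hsub2 : window g (j : I) ⊆ Sum.inl '' W := Set.sInter_subset_of_mem hDg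
      exact hsub2 (Set.mem_iInter₂.mp hp (j : I) hj)
    rcases S.eq_empty_or_nonempty with hS | ⟨j1, hj1⟩
    · refine ⟨∅, hcomm ⟨j0, by simp⟩, ?_⟩
      rw [hS] at hsub; exact hsub
    · have hdetuniv : Determines f j1 Set.univ := by
        intro x y hxy
        have : x = y := funext fun k => hxy k (Set.mem_univ k)
        rw [this]
      obtain ⟨q, _, hq⟩ := hdet j1 hj1 Set.univ hdetuniv
      refine ⟨S, hcomm ⟨q, ?_⟩, hsub⟩
      rw [Set.mem_iInter₂]
      intro j hj
      intro W hW
      obtain ⟨q', hq', heq⟩ := hdet j hj W hW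
      have : q' = q := Sum.inl_injective (heq.trans hq.symm)
      rwa [this] at hq'
end

section
/- For n ≥ 2, the only simplicial complex over I_n = {0, ..., n−1} (up to containing it) that generates the language ND_n of non-decreasing binary sequences is the full complex: any complex generating ND_n must contain the simplex I_n. Equivalently, for any f : B^J → {0,1}^n with image ND_n, the intersection ⋂_{i<n} W_f(i) is nonempty. -/
/-! Induct on a finite set `s` of input coordinates that determines every output. Pick
`j ∈ s`; if `j` lies in every window we are done, otherwise some output `i₀` ignores `j`.
Feed coordinate `j` the value `b` of an all-`⊤` input to the outputs `i ≤ i₀`, and the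
value `b'` of an all-`⊥` input to the outputs `i > i₀`. Because output `i₀` is blind to
`j`, the two halves glue to monotone sequences, the constants `⊤` and `⊥` are still
produced, and the new function is determined by `s \ {j}` with windows inside the old
ones. When `s = ∅` every output is constant, contradicting `⊤ ≠ ⊥`. -/

open Function Set

section Windows

variable {B J A I : Type*}

theorem Determines.mono {f : (J → B) → I → A} {i : I} {W W' : Set J}
    (hW : Determines f i W) (h : W ⊆ W') : Determines f i W' :=
  fun x y hxy => hW x y fun j hj => hxy j (h hj)

theorem determines_univ (f : (J → B) → I → A) (i : I) : Determines f i univ :=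
  fun x y hxy => by rw [funext fun j => hxy j (mem_univ j)]

theorem determines_compl_singleton_of_notMem_window {f : (J → B) → I → A} {i : I} {j : J}
    (h : j ∉ window f i) : Determines f i {j}ᶜ := by
  obtain ⟨W, hW, hjW⟩ : ∃ W, Determines f i W ∧ j ∉ W := by simpa [window] using h
  exact hW.mono fun k hk => mem_compl_singleton_iff.mpr fun hkj => hjW (hkj ▸ hk)

variable [DecidableEq J]

theorem Determines.apply_update_eq {g : (J → B) → I → A} {i : I} {j : J}
    (h : Determines g i {j}ᶜ) (x : J → B) (b b' : B) :
    g (update x j b) i = g (update x j b') i :=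
  h _ _ fun k hk => by rw [update_of_ne hk, update_of_ne hk]

def fixCoord (g : (J → B) → I → A) (j : J) (c : I → B) : (J → B) → I → A :=
  fun x i => g (update x j (c i)) i

theorem window_fixCoord_subset (g : (J → B) → I → A) (j : J) (c : I → B) (i : I) :
    window (fixCoord g j c) i ⊆ window g i :=
  sInter_subset_sInter fun _ hW x y hxy => hW _ _ fun k hk => by
    simp only [update_apply, hxy k hk]

theorem Determines.fixCoord {g : (J → B) → I → A} {i : I} {j : J} {s : Set J}
    (h : Determines g i (insert j s)) (c : I → B) : Determines (fixCoord g j c) i s :=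
  fun x y hxy => h _ _ fun k hk => by
    rcases hk with rfl | hk
    · simp
    · simp only [update_apply, hxy k hk]

end Windows

section Splice

variable {B J A I : Type*} [DecidableEq J] [LinearOrder I]

def splice (i₀ : I) (b b' : B) : I → B :=
  fun i => if i ≤ i₀ then b else b'

variable {g : (J → B) → I → A} {j : J} {i₀ i : I}

theorem fixCoord_splice_of_le (b b' : B) (x : J → B) (hi : i ≤ i₀) :
    fixCoord g j (splice i₀ b b') x i = g (update x j b) i := by
  simp [fixCoord, splice, hi]

theorem fixCoord_splice_of_ge (hi₀ : Determines g i₀ {j}ᶜ) (b b' : B) (x : J → B)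
    (hi : i₀ ≤ i) : fixCoord g j (splice i₀ b b') x i = g (update x j b') i := by
  rcases hi.eq_or_lt with rfl | hi
  · rw [fixCoord_splice_of_le b b' x le_rfl, hi₀.apply_update_eq]
  · simp [fixCoord, splice, not_le.mpr hi]

theorem monotone_fixCoord_splice [Preorder A] (hg : ∀ x, Monotone (g x))
    (hi₀ : Determines g i₀ {j}ᶜ) (b b' : B) (x : J → B) :
    Monotone (fixCoord g j (splice i₀ b b') x) :=
  MonotoneOn.Iic_union_Ici (a := i₀)
    (fun i hi i' hi' hii' => by
      rw [fixCoord_splice_of_le b b' x hi, fixCoord_splice_of_le b b' x hi']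
      exact hg _ hii')
    (fun i hi i' hi' hii' => by
      rw [fixCoord_splice_of_ge hi₀ b b' x hi, fixCoord_splice_of_ge hi₀ b b' x hi']
      exact hg _ hii')

theorem fixCoord_splice_self_eq_top [PartialOrder A] [OrderTop A] (hg : ∀ x, Monotone (g x))
    (hi₀ : Determines g i₀ {j}ᶜ) {x : J → B} (hx : g x = fun _ => ⊤) (b' : B) :
    fixCoord g j (splice i₀ (x j) b') x = fun _ => ⊤ := by
  have hle : ∀ i ≤ i₀, fixCoord g j (splice i₀ (x j) b') x i = ⊤ := fun i hi => by
    rw [fixCoord_splice_of_le _ _ x hi, update_eq_self, hx]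
  funext i
  rcases le_total i i₀ with hi | hi
  · exact hle i hi
  · exact top_le_iff.mp (hle i₀ le_rfl ▸ monotone_fixCoord_splice hg hi₀ _ _ x hi)

theorem fixCoord_splice_self_eq_bot [PartialOrder A] [OrderBot A] (hg : ∀ x, Monotone (g x))
    (hi₀ : Determines g i₀ {j}ᶜ) {y : J → B} (hy : g y = fun _ => ⊥) (b : B) :
    fixCoord g j (splice i₀ b (y j)) y = fun _ => ⊥ := by
  have hge : ∀ i, i₀ ≤ i → fixCoord g j (splice i₀ b (y j)) y i = ⊥ := fun i hi => by
    rw [fixCoord_splice_of_ge hi₀ _ _ y hi, update_eq_self, hy]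
  funext i
  rcases le_total i i₀ with hi | hi
  · exact le_bot_iff.mp (hge i₀ le_rfl ▸ monotone_fixCoord_splice hg hi₀ _ _ y hi)
  · exact hge i hi

end Splice

section Main

variable {B J A I : Type*} [LinearOrder I] [PartialOrder A] [BoundedOrder A] [Nontrivial A]

theorem nonempty_iInter_window_of_determines [Nonempty I] {s : Set J} (hs : s.Finite)
    {g : (J → B) → I → A} (hdet : ∀ i, Determines g i s) (hmono : ∀ x, Monotone (g x))
    (htop : (fun _ => ⊤) ∈ range g) (hbot : (fun _ => ⊥) ∈ range g) :
    (⋂ i, window g i).Nonempty := by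
  classical
  induction s, hs using Set.Finite.induction_on generalizing g with
  | empty =>
    obtain ⟨x, hx⟩ := htop
    obtain ⟨y, hy⟩ := hbot
    obtain ⟨i⟩ := ‹Nonempty I›
    have hxy : g x i = g y i := hdet i x y fun _ h => h.elim
    rw [hx, hy] at hxy
    exact absurd hxy top_ne_bot
  | @insert j s _ _ ih =>
    by_cases hj : ∀ i, j ∈ window g i
    · exact ⟨j, mem_iInter.mpr hj⟩
    obtain ⟨i₀, hi₀⟩ := not_forall.mp hj
    replace hi₀ := determines_compl_singleton_of_notMem_window hi₀
    obtain ⟨x, hx⟩ := htop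
    obtain ⟨y, hy⟩ := hbot
    have hmono' := monotone_fixCoord_splice hmono hi₀ (x j) (y j)
    have htop' := fixCoord_splice_self_eq_top hmono hi₀ hx (y j)
    have hbot' := fixCoord_splice_self_eq_bot hmono hi₀ hy (x j)
    obtain ⟨w, hw⟩ := ih (fun i => (hdet i).fixCoord _) hmono' ⟨x, htop'⟩ ⟨y, hbot'⟩
    exact ⟨w, mem_iInter.mpr fun i => window_fixCoord_subset g j _ i (mem_iInter.mp hw i)⟩

theorem nonempty_iInter_window_of_range_eq_monotone [Finite J] [Nonempty J]
    {f : (J → B) → I → A} (hf : range f = {x | Monotone x}) :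
    (⋂ i, window f i).Nonempty := by
  rcases isEmpty_or_nonempty I with _ | _
  · simp
  have hconst : ∀ a : A, (fun _ => a) ∈ range f := fun a => hf ▸ monotone_const
  exact nonempty_iInter_window_of_determines finite_univ (determines_univ f)
    (fun x => hf.subset (mem_range_self x)) (hconst ⊤) (hconst ⊥)

end Main

theorem stmt14_general (n : ℕ) :
    (∀ K : Set (Set (Fin n)),
      Generates K {x : Fin n → Bool | Monotone x} → Set.univ ∈ K) ∧
    (∀ (B J : Type) (_ : Finite B) (_ : Finite J) (_ : Nonempty J)
      (f : (J → B) → (Fin n → Bool)),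
        Set.range f = {x : Fin n → Bool | Monotone x} →
        (⋂ i : Fin n, window f i).Nonempty) := by
  have windows_meet : ∀ (B J : Type) (_ : Finite B) (_ : Finite J) (_ : Nonempty J)
      (f : (J → B) → (Fin n → Bool)),
        Set.range f = {x : Fin n → Bool | Monotone x} →
        (⋂ i : Fin n, window f i).Nonempty :=
    fun _ _ _ _ _ _ hf => nonempty_iInter_window_of_range_eq_monotone hf
  refine ⟨?_, windows_meet⟩
  rintro K ⟨B, J, hB, hJ, hJne, f, hf, hK⟩
  apply hK
  simpa [commComplex] using windows_meet B J hB hJ hJne f hf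

/-- any complex generating the non-decreasing binary sequences
of length `n ≥ 2` contains the full simplex; equivalently, for any `f`
generating them, the intersection of all input windows is nonempty. -/
theorem stmt14 (n : ℕ) (hn : 2 ≤ n) :
    (∀ K : Set (Set (Fin n)),
      Generates K {x : Fin n → Bool | Monotone x} → Set.univ ∈ K) ∧
    (∀ (B J : Type) (_ : Finite B) (_ : Finite J) (_ : Nonempty J)
      (f : (J → B) → (Fin n → Bool)),
        Set.range f = {x : Fin n → Bool | Monotone x} →
        (⋂ i : Fin n, window f i).Nonempty) :=
  stmt14_general n
end
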